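/- Let X, Y be Hilbert spaces, A ∈ B(X,Y), T a closed subspace of X, and S a closed subspace of Y. Suppose there exists a bounded operator G ∈ B(Y,X) with GAG = G, R(G) = T, N(G) = S (i.e., the outer inverse A_{T,S}^{(2)} exists). Then A_{T,S}^{(2)} = (P_{S^⊥} A P_T)⁺, the Moore–Penrose inverse of P_{S^⊥} A P_T, and moreover R((P_{S^⊥} A P_T)⁺) = T and N((P_{S^⊥} A P_T)⁺) = S. -/

import Mathlib

noncomputable section

open ContinuousLinearMap

/-- δ(M,N) = sup{dist(x,N) : x ∈ M, ‖x‖ = 1}, with sSup ∅ = 0 covering M = {0}. -/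
def gapDelta {H : Type*} [NormedAddCommGroup H] (M N : Set H) : ℝ :=
  sSup ((fun x => Metric.infDist x N) '' {x | x ∈ M ∧ ‖x‖ = 1})

/-- The gap δ̂(M,N) = max{δ(M,N), δ(N,M)}. -/
def gapHat {H : Type*} [NormedAddCommGroup H] (M N : Set H) : ℝ :=
  max (gapDelta M N) (gapDelta N M)

/-- Orthogonal projection onto a closed subspace, as an operator H →L[ℂ] H. -/
def projCLM {H : Type*} [NormedAddCommGroup H] [InnerProductSpace ℂ H] [CompleteSpace H]
    (K : Submodule ℂ H) (hK : IsClosed (K : Set H)) : H →L[ℂ] H :=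
  haveI := hK.completeSpace_coe
  K.subtypeL.comp (K.orthogonalProjectionOnto)

/-- G is the outer inverse A_{T,S}^{(2)}: GAG = G, R(G) = T, N(G) = S. -/
def IsOuterInv {X Y : Type*} [NormedAddCommGroup X] [NormedSpace ℂ X]
    [NormedAddCommGroup Y] [NormedSpace ℂ Y]
    (A : X →L[ℂ] Y) (T : Submodule ℂ X) (S : Submodule ℂ Y) (G : Y →L[ℂ] X) : Prop :=
  G ∘L (A ∘L G) = G ∧ LinearMap.range (G : Y →ₗ[ℂ] X) = T ∧ LinearMap.ker (G : Y →ₗ[ℂ] X) = S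

/-- B is the Moore–Penrose inverse of A. -/
def IsMPInv {X Y : Type*} [NormedAddCommGroup X] [InnerProductSpace ℂ X] [CompleteSpace X]
    [NormedAddCommGroup Y] [InnerProductSpace ℂ Y] [CompleteSpace Y]
    (A : X →L[ℂ] Y) (B : Y →L[ℂ] X) : Prop :=
  A ∘L (B ∘L A) = A ∧ B ∘L (A ∘L B) = B ∧
  adjoint (A ∘L B) = A ∘L B ∧ adjoint (B ∘L A) = B ∘L A

variable {X Y : Type*} [NormedAddCommGroup X] [InnerProductSpace ℂ X] [CompleteSpace X]
  [NormedAddCommGroup Y] [InnerProductSpace ℂ Y] [CompleteSpace Y]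

/-!
An outer inverse `G = A_{T,S}^{(2)}` already satisfies the four Penrose equations for
`M = P_{S^⊥} A P_T`: since `G` kills `S = N(G)` and `P_T` fixes `T = R(G)`, one gets
`G M = G A P_T = P_T` and `M G = P_{S^⊥} A G = P_{S^⊥}`, two orthogonal projections.
Uniqueness of the Moore–Penrose inverse then identifies `G` with `M⁺`.
-/

theorem projCLM_eq_starProjection (K : Submodule ℂ X) (hK : IsClosed (K : Set X))
    [K.HasOrthogonalProjection] : projCLM K hK = K.starProjection :=
  rfl

namespace IsMPInv

variable {M : X →L[ℂ] Y} {B C : Y →L[ℂ] X}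

theorem comp_inv_eq (hB : IsMPInv M B) (hC : IsMPInv M C) : M ∘L B = M ∘L C :=
  calc M ∘L B = adjoint (M ∘L B) := hB.2.2.1.symm
    _ = adjoint B ∘L adjoint (M ∘L (C ∘L M)) := by rw [hC.1, adjoint_comp]
    _ = adjoint (M ∘L B) ∘L adjoint (M ∘L C) := by simp only [adjoint_comp, comp_assoc]
    _ = M ∘L ((B ∘L M) ∘L C) := by rw [hB.2.2.1, hC.2.2.1]; rfl
    _ = M ∘L C := by rw [← comp_assoc, hB.1]

theorem inv_comp_eq (hB : IsMPInv M B) (hC : IsMPInv M C) : B ∘L M = C ∘L M :=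
  calc B ∘L M = adjoint (B ∘L M) := hB.2.2.2.symm
    _ = adjoint (M ∘L (C ∘L M)) ∘L adjoint B := by rw [hC.1, adjoint_comp]
    _ = adjoint (C ∘L M) ∘L adjoint (B ∘L M) := by simp only [adjoint_comp, comp_assoc]
    _ = C ∘L (M ∘L (B ∘L M)) := by rw [hB.2.2.2, hC.2.2.2]; rfl
    _ = C ∘L M := by rw [hB.1]

theorem unique (hB : IsMPInv M B) (hC : IsMPInv M C) : B = C :=
  calc B = B ∘L (M ∘L B) := hB.2.1.symm
    _ = (B ∘L M) ∘L C := by rw [hB.comp_inv_eq hC]; rfl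
    _ = C := by rw [hB.inv_comp_eq hC]; exact hC.2.1

end IsMPInv

namespace IsOuterInv

section

variable {E F : Type*} [NormedAddCommGroup E] [InnerProductSpace ℂ E]
  [NormedAddCommGroup F] [InnerProductSpace ℂ F]
  {A : E →L[ℂ] F} {T : Submodule ℂ E} {S : Submodule ℂ F} {G : F →L[ℂ] E}

theorem starProjection_comp [T.HasOrthogonalProjection] (hG : IsOuterInv A T S G) :
    T.starProjection ∘L G = G := by
  ext y
  exact Submodule.starProjection_eq_self_iff.mpr (hG.2.1 ▸ LinearMap.mem_range_self _ y)

theorem comp_starProjection_orthogonal [S.HasOrthogonalProjection] (hG : IsOuterInv A T S G) :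
    G ∘L Sᗮ.starProjection = G := by
  have hGS : G ∘L S.starProjection = 0 := by
    ext y
    exact hG.2.2 ▸ S.starProjection_apply_mem y
  rw [Submodule.starProjection_orthogonal, comp_sub, hGS, sub_zero, comp_id]

theorem comp_comp_starProjection [T.HasOrthogonalProjection] (hG : IsOuterInv A T S G) :
    G ∘L (A ∘L T.starProjection) = T.starProjection := by
  ext x
  obtain ⟨y, hy⟩ : T.starProjection x ∈ LinearMap.range (G : F →ₗ[ℂ] E) :=
    hG.2.1 ▸ T.starProjection_apply_mem x
  change G (A (T.starProjection x)) = T.starProjection x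
  rw [← hy]
  exact congr($(hG.1) y)

theorem starProjection_orthogonal_comp_comp [Sᗮ.HasOrthogonalProjection]
    (hG : IsOuterInv A T S G) :
    Sᗮ.starProjection ∘L (A ∘L G) = Sᗮ.starProjection := by
  ext y
  have hAGy : A (G y) - y ∈ S := by
    rw [← hG.2.2, LinearMap.mem_ker, map_sub]
    exact sub_eq_zero.mpr congr($(hG.1) y)
  have := (Sᗮ.starProjection_apply_eq_zero_iff).mpr (S.le_orthogonal_orthogonal hAGy)
  rwa [map_sub, sub_eq_zero] at this

end

variable {A : X →L[ℂ] Y} {T : Submodule ℂ X} {S : Submodule ℂ Y} {G : Y →L[ℂ] X}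

theorem isMPInv [T.HasOrthogonalProjection] [S.HasOrthogonalProjection]
    (hG : IsOuterInv A T S G) :
    IsMPInv (Sᗮ.starProjection ∘L (A ∘L T.starProjection)) G := by
  have hGM : G ∘L (Sᗮ.starProjection ∘L (A ∘L T.starProjection)) = T.starProjection := by
    rw [← comp_assoc, hG.comp_starProjection_orthogonal, hG.comp_comp_starProjection]
  have hMG : (Sᗮ.starProjection ∘L (A ∘L T.starProjection)) ∘L G = Sᗮ.starProjection := by
    rw [comp_assoc, comp_assoc, hG.starProjection_comp, hG.starProjection_orthogonal_comp_comp]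
  refine ⟨?_, ?_, ?_, ?_⟩
  · rw [← comp_assoc, hMG, ← comp_assoc]
    exact congr($(Sᗮ.isIdempotentElem_starProjection) ∘L (A ∘L T.starProjection))
  · rw [← comp_assoc, hGM, hG.starProjection_comp]
  · rw [hMG, (isSelfAdjoint_starProjection Sᗮ).adjoint_eq]
  · rw [hGM, (isSelfAdjoint_starProjection T).adjoint_eq]

end IsOuterInv

theorem stmt_4_general (A : X →L[ℂ] Y) (T : Submodule ℂ X) (S : Submodule ℂ Y)
    (hT : IsClosed (T : Set X))
    (G : Y →L[ℂ] X) (hG : IsOuterInv A T S G)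
    (B : Y →L[ℂ] X)
    (hB : IsMPInv (projCLM Sᗮ (Submodule.isClosed_orthogonal S) ∘L (A ∘L projCLM T hT)) B) :
    G = B ∧ LinearMap.range (B : Y →ₗ[ℂ] X) = T ∧ LinearMap.ker (B : Y →ₗ[ℂ] X) = S := by
  have := hT.completeSpace_coe
  have := (hG.2.2 ▸ G.isClosed_ker : IsClosed (S : Set Y)).completeSpace_coe
  rw [projCLM_eq_starProjection, projCLM_eq_starProjection] at hB
  obtain rfl : G = B := hG.isMPInv.unique hB
  exact ⟨rfl, hG.2.1, hG.2.2⟩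

theorem stmt_4 (A : X →L[ℂ] Y) (T : Submodule ℂ X) (S : Submodule ℂ Y)
    (hT : IsClosed (T : Set X)) (hS : IsClosed (S : Set Y))
    (G : Y →L[ℂ] X) (hG : IsOuterInv A T S G)
    (B : Y →L[ℂ] X)
    (hB : IsMPInv (projCLM Sᗮ (Submodule.isClosed_orthogonal S) ∘L (A ∘L projCLM T hT)) B) :
    G = B ∧ LinearMap.range (B : Y →ₗ[ℂ] X) = T ∧ LinearMap.ker (B : Y →ₗ[ℂ] X) = S :=
  stmt_4_general A T S hT G hG B hB
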